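/- For all δ ∈ 𝒪⁺, the total number of partitions of δ equals the sum over all primitive partitions λ = (γ₁^{n₁}⋯γ_l^{n_l}) of δ of the product p(n₁)p(n₂)⋯p(n_l), where p denotes the ordinary partition function on positive integers. -/

import Mathlib

open NumberField
open scoped Classical

/-- `K` is totally real: every complex embedding has real image. -/
def TotallyReal (K : Type) [Field K] [NumberField K] : Prop :=
  ∀ φ : K →+* ℂ, ∀ x : K, (φ x).im = 0

/-- An algebraic integer is totally positive if every real embedding sends it to a
positive real number. -/
def TPos (K : Type) [Field K] [NumberField K] (x : 𝓞 K) : Prop :=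
  ∀ φ : K →+* ℝ, 0 < φ (x : K)

/-- `γ ∈ 𝒪⁺` is primitive over `ℚ`: it is not `m • β` for any integer `m ≥ 2`
and totally positive `β`. -/
def IsPrim (K : Type) [Field K] [NumberField K] (γ : 𝓞 K) : Prop :=
  TPos K γ ∧ ∀ (m : ℕ) (β : 𝓞 K), 2 ≤ m → TPos K β → γ ≠ (m : 𝓞 K) * β

/-- A partition of `δ ∈ 𝒪⁺`: a finite multiset of totally positive integers summing to `δ`. -/
def IsPartition (K : Type) [Field K] [NumberField K] (δ : 𝓞 K) (lam : Multiset (𝓞 K)) : Prop :=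
  (∀ x ∈ lam, TPos K x) ∧ lam.sum = δ

section Aux
variable {K : Type} [Field K] [NumberField K]

/-- the trace measure -/
noncomputable def tr (x : 𝓞 K) : ℚ := Algebra.trace ℚ K (x : K)

/-- a complex embedding with all-real image yields a real embedding -/
def realEmb (φ : K →+* ℂ) (h : ∀ x : K, (φ x).im = 0) : K →+* ℝ where
  toFun x := (φ x).re
  map_one' := by simp
  map_mul' x y := by simp [Complex.mul_re, h]
  map_zero' := by simp
  map_add' x y := by simp [Complex.add_re]

lemma re_pos_of_tpos (hK : TotallyReal K) {x : 𝓞 K} (hx : TPos K x) (φ : K →+* ℂ) :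
    0 < (φ (x : K)).re := hx (realEmb φ (hK φ))

lemma tr_cast_eq_sum (x : 𝓞 K) :
    ((tr x : ℚ) : ℂ) = ∑ σ : K →ₐ[ℚ] ℂ, σ (x : K) := by
  rw [tr, ← trace_eq_sum_embeddings (E := ℂ), eq_ratCast]

lemma alghom_univ_nonempty : Nonempty (K →ₐ[ℚ] ℂ) := by
  have : Nonempty (K →+* ℂ) := by
    have := NumberField.Embeddings.card K ℂ
    have h2 : 0 < Fintype.card (K →+* ℂ) := by
      rw [this]; exact Module.finrank_pos
    exact Fintype.card_pos_iff.mp h2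
  exact ⟨this.some.toRatAlgHom⟩

lemma tr_real_eq (x : 𝓞 K) :
    ((tr x : ℚ) : ℝ) = ∑ σ : K →ₐ[ℚ] ℂ, (σ (x : K)).re := by
  have := congrArg Complex.re (tr_cast_eq_sum x)
  simpa [Complex.re_sum] using this

lemma tr_pos (hK : TotallyReal K) {x : 𝓞 K} (hx : TPos K x) : 0 < tr x := by
  have h : (0:ℝ) < ((tr x : ℚ) : ℝ) := by
    rw [tr_real_eq]
    have : Nonempty (K →ₐ[ℚ] ℂ) := alghom_univ_nonempty
    refine Finset.sum_pos (fun σ _ => ?_) Finset.univ_nonempty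
    exact re_pos_of_tpos hK hx σ.toRingHom
  exact_mod_cast h

lemma tr_int (x : 𝓞 K) : ∃ z : ℤ, (z : ℚ) = tr x := by
  have : IsIntegral ℤ (tr x) := Algebra.isIntegral_trace (L := ℚ) (F := K) x.2
  exact IsIntegrallyClosed.isIntegral_iff.mp this

lemma one_le_tr (hK : TotallyReal K) {x : 𝓞 K} (hx : TPos K x) : 1 ≤ tr x := by
  obtain ⟨z, hz⟩ := tr_int x
  have := tr_pos hK hx
  rw [← hz] at this ⊢
  exact_mod_cast this

lemma tr_add (x y : 𝓞 K) : tr (x + y) = tr x + tr y := by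
  simp [tr, map_add]

lemma tr_sum (s : Multiset (𝓞 K)) : tr s.sum = (s.map tr).sum := by
  induction s using Multiset.induction with
  | empty => simp [tr]
  | cons a s ih => simp [tr_add, ih]

lemma tr_nat_mul (m : ℕ) (x : 𝓞 K) : tr ((m : 𝓞 K) * x) = m * tr x := by
  have : (((m : 𝓞 K) * x : 𝓞 K) : K) = (m : ℚ) • (x : K) := by
    push_cast
    rw [Algebra.smul_def, map_natCast]
  rw [tr, tr, this, map_smul, smul_eq_mul]

end Aux

section Fin1
variable {K : Type} [Field K] [NumberField K]

omit [NumberField K] in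
lemma norm_eq_re (φ : K →+* ℂ) (h : ∀ y : K, (φ y).im = 0) {x : K} (hx : 0 ≤ (φ x).re) :
    ‖φ x‖ = (φ x).re := by
  have hre : φ x = ((φ x).re : ℂ) := Complex.ext rfl (by simp [h x])
  rw [hre]
  simp only [Complex.norm_real, Complex.ofReal_re]
  exact abs_of_nonneg hx

lemma re_le_tr (hK : TotallyReal K) {x : 𝓞 K} (hx : TPos K x) (φ : K →+* ℂ) :
    (φ (x : K)).re ≤ ((tr x : ℚ) : ℝ) := by
  rw [tr_real_eq]
  have : φ (x : K) = φ.toRatAlgHom (x : K) := rfl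
  rw [this]
  exact Finset.single_le_sum
    (f := fun σ : K →ₐ[ℚ] ℂ => (σ (x : K)).re)
    (fun σ _ => le_of_lt (re_pos_of_tpos hK hx σ.toRingHom)) (Finset.mem_univ _)

lemma finite_tpos_le (hK : TotallyReal K) (B : ℚ) :
    {x : 𝓞 K | TPos K x ∧ tr x ≤ B}.Finite := by
  have hS : {y : K | IsIntegral ℤ y ∧ ∀ φ : K →+* ℂ, ‖φ y‖ ≤ (B : ℝ)}.Finite :=
    NumberField.Embeddings.finite_of_norm_le K ℂ (B : ℝ)
  have hinj : Function.Injective (fun x : 𝓞 K => (x : K)) :=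
    NumberField.RingOfIntegers.coe_injective
  refine Set.Finite.subset (Set.Finite.preimage hinj.injOn hS) ?_
  rintro x ⟨hx, hb⟩
  refine ⟨x.2, fun φ => ?_⟩
  rw [norm_eq_re φ (hK φ) (le_of_lt (re_pos_of_tpos hK hx φ))]
  calc (φ (x : K)).re ≤ ((tr x : ℚ) : ℝ) := re_le_tr hK hx φ
    _ ≤ (B : ℝ) := by exact_mod_cast hb

lemma finite_multisets {α : Type*} {s : Set α} (hs : s.Finite) (n : ℕ) :
    {m : Multiset α | (∀ x ∈ m, x ∈ s) ∧ Multiset.card m ≤ n}.Finite := by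
  induction n with
  | zero =>
    refine Set.Finite.subset (Set.finite_singleton (0 : Multiset α)) ?_
    rintro m ⟨-, hc⟩
    simpa using Multiset.card_eq_zero.mp (Nat.le_zero.mp hc)
  | succ n ih =>
    refine Set.Finite.subset (Set.Finite.union (Set.finite_singleton (0 : Multiset α))
      (hs.biUnion (fun a _ => ih.image (fun m => a ::ₘ m)))) ?_
    rintro m ⟨hmem, hc⟩
    rcases Multiset.empty_or_exists_mem m with h | ⟨a, ha⟩
    · exact Or.inl (by simpa using h)
    · refine Or.inr (Set.mem_biUnion (hmem a ha) ⟨m.erase a, ⟨?_, ?_⟩, ?_⟩)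
      · exact fun x hx => hmem x (Multiset.mem_of_mem_erase hx)
      · have h1 := Multiset.card_erase_of_mem ha
        have h2 : (Multiset.card m).pred = Multiset.card m - 1 := rfl
        omega
      · exact Multiset.cons_erase ha

lemma card_le_sum_tr (s : Multiset (𝓞 K)) (h : ∀ x ∈ s, 1 ≤ tr x) :
    (Multiset.card s : ℚ) ≤ (s.map tr).sum := by
  induction s using Multiset.induction with
  | empty => simp
  | cons a s ih =>
    simp only [Multiset.card_cons, Multiset.map_cons, Multiset.sum_cons]
    push_cast
    have h1 := h a (Multiset.mem_cons_self a s)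
    have h2 := ih (fun x hx => h x (Multiset.mem_cons_of_mem hx))
    linarith

lemma tr_le_of_mem {s : Multiset (𝓞 K)} (h : ∀ x ∈ s, 1 ≤ tr x) {x : 𝓞 K} (hx : x ∈ s) :
    tr x ≤ (s.map tr).sum := by
  rw [← Multiset.cons_erase hx, Multiset.map_cons, Multiset.sum_cons]
  have : (0:ℚ) ≤ ((s.erase x).map tr).sum := by
    refine Multiset.sum_nonneg (fun q hq => ?_)
    obtain ⟨y, hy, rfl⟩ := Multiset.mem_map.mp hq
    exact le_trans zero_le_one (h y (Multiset.mem_of_mem_erase hy))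
  linarith

lemma partitions_finite (hK : TotallyReal K) (δ : 𝓞 K) :
    {lam : Multiset (𝓞 K) | IsPartition K δ lam}.Finite := by
  refine Set.Finite.subset
    (finite_multisets (finite_tpos_le hK (tr δ)) ⌊tr δ⌋₊) ?_
  rintro lam ⟨hmem, hsum⟩
  have h1 : ∀ x ∈ lam, 1 ≤ tr x := fun x hx => one_le_tr hK (hmem x hx)
  have hts : (lam.map tr).sum = tr δ := by rw [← hsum, tr_sum]
  constructor
  · intro x hx
    exact ⟨hmem x hx, by rw [← hts]; exact tr_le_of_mem h1 hx⟩
  · refine Nat.le_floor ?_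
    rw [← hts]
    exact card_le_sum_tr lam h1
end Fin1
section Prim
variable {K : Type} [Field K] [NumberField K]

omit [NumberField K] in
lemma coe_nat_mul (m : ℕ) (γ : 𝓞 K) : (((m : 𝓞 K) * γ : 𝓞 K) : K) = (m : K) * (γ : K) := by
  push_cast; ring

lemma tpos_nat_mul {m : ℕ} (hm : 0 < m) {γ : 𝓞 K} (hγ : TPos K γ) :
    TPos K ((m : 𝓞 K) * γ) := by
  intro ψ
  rw [coe_nat_mul, map_mul, map_natCast]
  exact mul_pos (by exact_mod_cast hm) (hγ ψ)

lemma exists_pdec (hK : TotallyReal K) {x : 𝓞 K} (hx : TPos K x) :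
    ∃ (m : ℕ) (γ : 𝓞 K), 0 < m ∧ IsPrim K γ ∧ x = (m : 𝓞 K) * γ := by
  suffices H : ∀ n (x : 𝓞 K), TPos K x → ⌊tr x⌋₊ ≤ n →
      ∃ (m : ℕ) (γ : 𝓞 K), 0 < m ∧ IsPrim K γ ∧ x = (m : 𝓞 K) * γ from H ⌊tr x⌋₊ x hx le_rfl
  intro n
  induction n with
  | zero =>
    intro x hx hle
    exfalso
    have h1 : 1 ≤ tr x := one_le_tr hK hx
    have : 1 ≤ ⌊tr x⌋₊ := Nat.le_floor (by exact_mod_cast h1)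
    omega
  | succ n ih =>
    intro x hx hle
    by_cases hp : IsPrim K x
    · exact ⟨1, x, one_pos, hp, by simp⟩
    · have : ∃ (m : ℕ) (β : 𝓞 K), 2 ≤ m ∧ TPos K β ∧ x = (m : 𝓞 K) * β := by
        by_contra hcon
        push_neg at hcon
        exact hp ⟨hx, fun m β h2 hβ => hcon m β h2 hβ⟩
      obtain ⟨m, β, h2, hβ, rfl⟩ := this
      have h1β : 1 ≤ tr β := one_le_tr hK hβ
      have htr : tr ((m : 𝓞 K) * β) = m * tr β := tr_nat_mul m β
      have hfl : ⌊tr β⌋₊ ≤ n := by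
        have hfb : 1 ≤ ⌊tr β⌋₊ := Nat.le_floor (by exact_mod_cast h1β)
        have h2f : 2 * ⌊tr β⌋₊ ≤ ⌊tr ((m : 𝓞 K) * β)⌋₊ := by
          refine Nat.le_floor ?_
          have hfb' : (⌊tr β⌋₊ : ℚ) ≤ tr β := Nat.floor_le (by linarith)
          have : (2 : ℚ) * tr β ≤ m * tr β := by
            have : (2:ℚ) ≤ m := by exact_mod_cast h2
            nlinarith
          rw [htr]
          push_cast
          nlinarith
        omega
      obtain ⟨m', γ, hm', hγ, rfl⟩ := ih β hβ hfl
      refine ⟨m * m', γ, by positivity, hγ, ?_⟩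
      push_cast
      ring

lemma nat_cancel {n : ℕ} (hn : 0 < n) {a b : 𝓞 K} (h : (n : 𝓞 K) * a = (n : 𝓞 K) * b) :
    a = b :=
  mul_left_cancel₀ (by exact_mod_cast hn.ne') h

lemma prim_aux {m₁ m₁' : ℕ} (hc : Nat.Coprime m₁ m₁') (h1' : 0 < m₁')
    {γ γ' : 𝓞 K} (hγ : IsPrim K γ) (hγ' : IsPrim K γ')
    (heq : (m₁ : 𝓞 K) * γ = (m₁' : 𝓞 K) * γ') : m₁' = 1 := by
  by_contra hne
  have h2 : 2 ≤ m₁' := by omega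
  have hcop : IsCoprime (m₁ : ℤ) (m₁' : ℤ) := by
    rw [Int.isCoprime_iff_gcd_eq_one]
    exact_mod_cast hc
  obtain ⟨a, b, hab⟩ := hcop
  set β : 𝓞 K := (a : 𝓞 K) * γ' + (b : 𝓞 K) * γ with hβ
  have hkey : γ = (m₁' : 𝓞 K) * β := by
    have : ((a * m₁ + b * m₁' : ℤ) : 𝓞 K) = 1 := by rw [hab]; simp
    calc γ = ((a * m₁ + b * m₁' : ℤ) : 𝓞 K) * γ := by rw [this, one_mul]
      _ = (a : 𝓞 K) * ((m₁ : 𝓞 K) * γ) + (b : 𝓞 K) * ((m₁' : 𝓞 K) * γ) := by push_cast; ring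
      _ = (a : 𝓞 K) * ((m₁' : 𝓞 K) * γ') + (b : 𝓞 K) * ((m₁' : 𝓞 K) * γ) := by rw [heq]
      _ = (m₁' : 𝓞 K) * β := by rw [hβ]; ring
  have hβpos : TPos K β := by
    intro ψ
    have hpos := hγ.1 ψ
    rw [hkey, coe_nat_mul, map_mul, map_natCast] at hpos
    have hm : (0:ℝ) < m₁' := by exact_mod_cast h1'
    nlinarith
  exact hγ.2 m₁' β h2 hβpos hkey

lemma pdec_unique {m m' : ℕ} {γ γ' : 𝓞 K} (hm : 0 < m) (hm' : 0 < m')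
    (hγ : IsPrim K γ) (hγ' : IsPrim K γ')
    (h : (m : 𝓞 K) * γ = (m' : 𝓞 K) * γ') : m = m' ∧ γ = γ' := by
  set g := Nat.gcd m m' with hg
  have hgpos : 0 < g := Nat.gcd_pos_of_pos_left m' hm
  set m₁ := m / g with hm₁
  set m₁' := m' / g with hm₁'
  have hme : m = g * m₁ := (Nat.mul_div_cancel' (Nat.gcd_dvd_left m m')).symm
  have hm'e : m' = g * m₁' := (Nat.mul_div_cancel' (Nat.gcd_dvd_right m m')).symm
  have hc : Nat.Coprime m₁ m₁' := Nat.coprime_div_gcd_div_gcd hgpos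
  have h1 : 0 < m₁ := by
    rcases Nat.eq_zero_or_pos m₁ with h0 | h0
    · rw [h0, Nat.mul_zero] at hme; omega
    · exact h0
  have h1' : 0 < m₁' := by
    rcases Nat.eq_zero_or_pos m₁' with h0 | h0
    · rw [h0, Nat.mul_zero] at hm'e; omega
    · exact h0
  have hcan : (m₁ : 𝓞 K) * γ = (m₁' : 𝓞 K) * γ' := by
    apply nat_cancel hgpos
    have := h
    rw [hme, hm'e] at this
    push_cast at this ⊢
    linear_combination this
  have e1' : m₁' = 1 := prim_aux hc h1' hγ hγ' hcan
  have e1 : m₁ = 1 := prim_aux hc.symm h1 hγ' hγ hcan.symm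
  have hmm : m = m' := by rw [hme, hm'e, e1, e1']
  refine ⟨hmm, ?_⟩
  apply nat_cancel hm
  rw [h, hmm]

noncomputable def pdec (x : 𝓞 K) : ℕ × 𝓞 K :=
  if h : ∃ p : ℕ × 𝓞 K, 0 < p.1 ∧ IsPrim K p.2 ∧ x = (p.1 : 𝓞 K) * p.2 then h.choose
  else (1, 1)

lemma pdec_eq {m : ℕ} {γ : 𝓞 K} (hm : 0 < m) (hγ : IsPrim K γ) :
    pdec ((m : 𝓞 K) * γ) = (m, γ) := by
  have hex : ∃ p : ℕ × 𝓞 K, 0 < p.1 ∧ IsPrim K p.2 ∧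
      (m : 𝓞 K) * γ = (p.1 : 𝓞 K) * p.2 := ⟨(m, γ), hm, hγ, rfl⟩
  rw [pdec, dif_pos hex]
  obtain ⟨h1, h2, h3⟩ := hex.choose_spec
  obtain ⟨e1, e2⟩ := pdec_unique h1 hm h2 hγ h3.symm
  exact Prod.ext e1 e2

lemma pdec_spec (hK : TotallyReal K) {x : 𝓞 K} (hx : TPos K x) :
    0 < (pdec x).1 ∧ IsPrim K (pdec x).2 ∧ x = ((pdec x).1 : 𝓞 K) * (pdec x).2 := by
  obtain ⟨m, γ, hm, hγ, rfl⟩ := exists_pdec hK hx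
  rw [pdec_eq hm hγ]
  exact ⟨hm, hγ, rfl⟩

end Prim
section Phi
variable {K : Type} [Field K] [NumberField K]

noncomputable def phi (lam : Multiset (𝓞 K)) : Multiset (𝓞 K) :=
  lam.bind (fun x => Multiset.replicate (pdec x).1 (pdec x).2)

lemma phi_zero : phi (0 : Multiset (𝓞 K)) = 0 := Multiset.zero_bind _

lemma phi_cons (a : 𝓞 K) (s : Multiset (𝓞 K)) :
    phi (a ::ₘ s) = Multiset.replicate (pdec a).1 (pdec a).2 + phi s :=
  Multiset.cons_bind _ _ _

lemma phi_add (s t : Multiset (𝓞 K)) : phi (s + t) = phi s + phi t :=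
  Multiset.add_bind _ _ _

lemma phi_sum_eq (hK : TotallyReal K) {lam : Multiset (𝓞 K)} (h : ∀ x ∈ lam, TPos K x) :
    (phi lam).sum = lam.sum := by
  induction lam using Multiset.induction with
  | empty => simp [phi_zero]
  | cons a s ih =>
    rw [phi_cons, Multiset.sum_add, Multiset.sum_cons,
      ih (fun x hx => h x (Multiset.mem_cons_of_mem hx)), Multiset.sum_replicate,
      nsmul_eq_mul]
    congr 1
    exact ((pdec_spec hK (h a (Multiset.mem_cons_self a s))).2.2).symm

lemma phi_prim (hK : TotallyReal K) {lam : Multiset (𝓞 K)} (h : ∀ x ∈ lam, TPos K x) :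
    ∀ y ∈ phi lam, IsPrim K y := by
  intro y hy
  obtain ⟨x, hx, hy2⟩ := Multiset.mem_bind.mp hy
  rw [Multiset.eq_of_mem_replicate hy2]
  exact (pdec_spec hK (h x hx)).2.1

lemma phi_partition (hK : TotallyReal K) {δ : 𝓞 K} {lam : Multiset (𝓞 K)}
    (h : IsPartition K δ lam) :
    IsPartition K δ (phi lam) ∧ ∀ y ∈ phi lam, IsPrim K y :=
  ⟨⟨fun y hy => (phi_prim hK h.1 y hy).1, by rw [phi_sum_eq hK h.1, h.2]⟩, phi_prim hK h.1⟩

lemma count_phi (lam : Multiset (𝓞 K)) (γ : 𝓞 K) :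
    (phi lam).count γ
      = ((lam.filter (fun x => (pdec x).2 = γ)).map (fun x => (pdec x).1)).sum := by
  induction lam using Multiset.induction with
  | empty => simp [phi_zero]
  | cons a s ih =>
    rw [phi_cons, Multiset.count_add, ih]
    by_cases hc : (pdec a).2 = γ
    · rw [Multiset.filter_cons_of_pos (p := fun x => (pdec x).2 = γ) _ hc, Multiset.count_replicate, if_pos hc,
        Multiset.map_cons, Multiset.sum_cons]
    · rw [Multiset.filter_cons_of_neg (p := fun x => (pdec x).2 = γ) _ hc, Multiset.count_replicate, if_neg hc, zero_add]

lemma phi_piece {γ : 𝓞 K} (hγ : IsPrim K γ) {p : Multiset ℕ} (hp : ∀ m ∈ p, 0 < m) :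
    phi (p.map (fun m : ℕ => (m : 𝓞 K) * γ)) = Multiset.replicate p.sum γ := by
  induction p using Multiset.induction with
  | empty => simp [phi_zero]
  | cons m p ih =>
    rw [Multiset.map_cons, phi_cons, pdec_eq (hp m (Multiset.mem_cons_self m p)) hγ,
      ih (fun x hx => hp x (Multiset.mem_cons_of_mem hx)), Multiset.sum_cons,
      Multiset.replicate_add]

lemma piece_sum (γ : 𝓞 K) (p : Multiset ℕ) :
    (p.map (fun m : ℕ => (m : 𝓞 K) * γ)).sum = (p.sum : 𝓞 K) * γ := by
  induction p using Multiset.induction with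
  | empty => simp
  | cons m p ih =>
    rw [Multiset.map_cons, Multiset.sum_cons, ih, Multiset.sum_cons]
    push_cast
    ring

lemma multiset_sum_sum {ι M : Type*} [AddCommMonoid M] (s : Finset ι) (g : ι → Multiset M) :
    (∑ i ∈ s, g i).sum = ∑ i ∈ s, (g i).sum := by
  classical
  induction s using Finset.induction_on with
  | empty => simp
  | insert a s hni ih => rw [Finset.sum_insert hni, Finset.sum_insert hni,
      Multiset.sum_add, ih]

lemma phi_finsum {ι : Type*} (s : Finset ι) (g : ι → Multiset (𝓞 K)) :
    phi (∑ i ∈ s, g i) = ∑ i ∈ s, phi (g i) := by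
  classical
  induction s using Finset.induction_on with
  | empty => simp [phi_zero]
  | insert a s hni ih => rw [Finset.sum_insert hni, Finset.sum_insert hni,
      phi_add, ih]

lemma filter_finsum {ι α : Type*} (p : α → Prop) [DecidablePred p]
    (s : Finset ι) (g : ι → Multiset α) :
    (∑ i ∈ s, g i).filter p = ∑ i ∈ s, (g i).filter p := by
  classical
  induction s using Finset.induction_on with
  | empty => simp
  | insert a s hni ih => rw [Finset.sum_insert hni, Finset.sum_insert hni,
      Multiset.filter_add, ih]

lemma sum_filter_eq {α : Type*} [DecidableEq α] (s : Multiset α) (t : Finset α) (g : α → α)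
    (h : ∀ x ∈ s, g x ∈ t) :
    ∑ γ ∈ t, s.filter (fun x => g x = γ) = s := by
  induction s using Multiset.induction with
  | empty => simp
  | cons a s ih =>
    have h1 : g a ∈ t := h a (Multiset.mem_cons_self a s)
    simp_rw [Multiset.filter_cons]
    rw [Finset.sum_add_distrib, ih (fun x hx => h x (Multiset.mem_cons_of_mem hx)),
      Finset.sum_ite_eq, if_pos h1, Multiset.singleton_add]

lemma mu_eq_sum_replicate {α : Type*} [DecidableEq α] (mu : Multiset α) :
    ∑ γ ∈ mu.toFinset, Multiset.replicate (mu.count γ) γ = mu := by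
  conv_rhs => rw [← Multiset.toFinset_sum_count_nsmul_eq mu]
  refine Finset.sum_congr rfl (fun γ _ => ?_)
  rw [Multiset.nsmul_singleton]

lemma fiber_card (hK : TotallyReal K) (δ : 𝓞 K) {mu : Multiset (𝓞 K)}
    (hmu : IsPartition K δ mu) (hprim : ∀ x ∈ mu, IsPrim K x) :
    {lam : Multiset (𝓞 K) | IsPartition K δ lam ∧ phi lam = mu}.ncard
      = ∏ γ ∈ mu.toFinset, Fintype.card (Nat.Partition (mu.count γ)) := by
  classical
  set F : Set (Multiset (𝓞 K)) := {lam | IsPartition K δ lam ∧ phi lam = mu} with hF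
  -- the backward map
  set bwd : (∀ γ : mu.toFinset, Nat.Partition (mu.count γ.1)) → Multiset (𝓞 K) :=
    fun f => ∑ γ ∈ mu.toFinset.attach, ((f γ).parts.map (fun m : ℕ => (m : 𝓞 K) * γ.1)) with hbwd
  have hprim' : ∀ γ : mu.toFinset, IsPrim K γ.1 :=
    fun γ => hprim γ.1 (Multiset.mem_toFinset.mp γ.2)
  -- bwd lands in F
  have hbwdF : ∀ f, bwd f ∈ F := by
    intro f
    have hphi : phi (bwd f) = mu := by
      rw [hbwd]
      dsimp only
      rw [phi_finsum]
      have : ∀ γ ∈ mu.toFinset.attach,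
          phi ((f γ).parts.map (fun m : ℕ => (m : 𝓞 K) * γ.1))
            = Multiset.replicate (mu.count γ.1) γ.1 := by
        intro γ _
        rw [phi_piece (hprim' γ) (fun m hm => (f γ).parts_pos hm), (f γ).parts_sum]
      rw [Finset.sum_congr rfl this, Finset.sum_attach mu.toFinset
        (fun γ => Multiset.replicate (mu.count γ) γ), mu_eq_sum_replicate]
    refine ⟨⟨?_, ?_⟩, hphi⟩
    · intro x hx
      rw [hbwd] at hx
      obtain ⟨γ, -, hxγ⟩ := Multiset.mem_sum.mp hx
      obtain ⟨m, hm, rfl⟩ := Multiset.mem_map.mp hxγ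
      exact tpos_nat_mul ((f γ).parts_pos hm) (hprim' γ).1
    · have := phi_sum_eq hK (lam := bwd f) ?_
      · rw [← this, hphi, hmu.2]
      · intro x hx
        rw [hbwd] at hx
        obtain ⟨γ, -, hxγ⟩ := Multiset.mem_sum.mp hx
        obtain ⟨m, hm, rfl⟩ := Multiset.mem_map.mp hxγ
        exact tpos_nat_mul ((f γ).parts_pos hm) (hprim' γ).1
  -- forward map
  have hfwd_parts_pos : ∀ (lam : F) (γ : mu.toFinset),
      ∀ {i : ℕ}, i ∈ (lam.1.filter (fun x => (pdec x).2 = γ.1)).map (fun x => (pdec x).1)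
        → 0 < i := by
    rintro lam γ i hi
    obtain ⟨x, hx, rfl⟩ := Multiset.mem_map.mp hi
    exact (pdec_spec hK (lam.2.1.1 x (Multiset.mem_of_mem_filter hx))).1
  have hfwd_parts_sum : ∀ (lam : F) (γ : mu.toFinset),
      ((lam.1.filter (fun x => (pdec x).2 = γ.1)).map (fun x => (pdec x).1)).sum
        = mu.count γ.1 := by
    intro lam γ
    rw [← count_phi, lam.2.2]
  set fwd : F → (∀ γ : mu.toFinset, Nat.Partition (mu.count γ.1)) :=
    fun lam γ => ⟨(lam.1.filter (fun x => (pdec x).2 = γ.1)).map (fun x => (pdec x).1),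
      hfwd_parts_pos lam γ, hfwd_parts_sum lam γ⟩ with hfwdd
  -- left inverse
  have hleft : ∀ lam : F, bwd (fwd lam) = lam.1 := by
    intro lam
    rw [hbwd]
    dsimp only [hfwdd]
    have hstep : ∀ γ ∈ mu.toFinset.attach,
        ((lam.1.filter (fun x => (pdec x).2 = γ.1)).map (fun x => (pdec x).1)).map
            (fun m : ℕ => (m : 𝓞 K) * γ.1)
          = lam.1.filter (fun x => (pdec x).2 = γ.1) := by
      intro γ _
      rw [Multiset.map_map]
      have : ∀ x ∈ lam.1.filter (fun x => (pdec x).2 = γ.1),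
          ((fun m : ℕ => (m : 𝓞 K) * γ.1) ∘ fun x => (pdec x).1) x = id x := by
        intro x hx
        have h2 := (Multiset.mem_filter.mp hx).2
        have h1 := (pdec_spec hK (lam.2.1.1 x (Multiset.mem_of_mem_filter hx))).2.2
        simp only [Function.comp_apply, id_eq, ← h2]
        exact h1.symm
      rw [Multiset.map_congr rfl this, Multiset.map_id]
    rw [Finset.sum_congr rfl hstep,
      Finset.sum_attach mu.toFinset (fun γ => lam.1.filter (fun x => (pdec x).2 = γ))]
    refine sum_filter_eq lam.1 mu.toFinset (fun x => (pdec x).2) ?_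
    intro x hx
    rw [Multiset.mem_toFinset, ← lam.2.2]
    refine Multiset.mem_bind.mpr ⟨x, hx, Multiset.mem_replicate.mpr
      ⟨(pdec_spec hK (lam.2.1.1 x hx)).1.ne', rfl⟩⟩
  -- right inverse
  have hright : ∀ f, fwd ⟨bwd f, hbwdF f⟩ = f := by
    intro f
    funext γ
    apply Nat.Partition.ext
    show (((bwd f).filter (fun x => (pdec x).2 = γ.1)).map (fun x => (pdec x).1)) = (f γ).parts
    rw [hbwd]
    dsimp only
    rw [filter_finsum]
    have hstep : ∀ γ' ∈ mu.toFinset.attach,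
        ((f γ').parts.map (fun m : ℕ => (m : 𝓞 K) * γ'.1)).filter (fun x => (pdec x).2 = γ.1)
          = if γ' = γ then (f γ).parts.map (fun m : ℕ => (m : 𝓞 K) * γ.1) else 0 := by
      intro γ' _
      by_cases hgg : γ' = γ
      · subst hgg
        rw [if_pos rfl]
        refine Multiset.filter_eq_self.mpr ?_
        intro x hx
        obtain ⟨m, hm, rfl⟩ := Multiset.mem_map.mp hx
        rw [pdec_eq ((f γ').parts_pos hm) (hprim' γ')]
      · rw [if_neg hgg]
        refine Multiset.filter_eq_nil.mpr ?_
        intro x hx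
        obtain ⟨m, hm, rfl⟩ := Multiset.mem_map.mp hx
        rw [pdec_eq ((f γ').parts_pos hm) (hprim' γ')]
        exact fun hc => hgg (Subtype.ext hc)
    rw [Finset.sum_congr rfl hstep, Finset.sum_ite_eq' mu.toFinset.attach γ
      (fun _ => (f γ).parts.map (fun m : ℕ => (m : 𝓞 K) * γ.1)), if_pos (Finset.mem_attach _ γ),
      Multiset.map_map]
    have : ∀ m ∈ (f γ).parts, ((fun x => (pdec x).1) ∘ fun m : ℕ => (m : 𝓞 K) * γ.1) m = id m := by
      intro m hm
      simp only [Function.comp_apply, id_eq, pdec_eq ((f γ).parts_pos hm) (hprim' γ)]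
    rw [Multiset.map_congr rfl this, Multiset.map_id]
  -- assemble
  have hcard : Nat.card F = Nat.card (∀ γ : mu.toFinset, Nat.Partition (mu.count γ.1)) := by
    refine Nat.card_congr ⟨fwd, fun f => ⟨bwd f, hbwdF f⟩, ?_, hright⟩
    intro lam
    exact Subtype.ext (hleft lam)
  rw [← Nat.card_coe_set_eq, hcard, Nat.card_eq_fintype_card, Fintype.card_pi,
    ← Finset.prod_coe_sort mu.toFinset (fun γ => Fintype.card (Nat.Partition (mu.count γ)))]

end Phi

variable (K : Type) [Field K] [NumberField K]

theorem card_partitions_eq_sum_over_primitive_partitions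
    (hK : TotallyReal K) (δ : 𝓞 K) (hδ : TPos K δ) :
    {lam : Multiset (𝓞 K) | IsPartition K δ lam}.ncard
      = ∑ᶠ mu ∈ {mu : Multiset (𝓞 K) | IsPartition K δ mu ∧ ∀ x ∈ mu, IsPrim K x},
          ∏ γ ∈ mu.toFinset, Fintype.card (Nat.Partition (mu.count γ)) := by
  classical
  have hPfin := partitions_finite hK δ
  have hSfin : {mu : Multiset (𝓞 K) | IsPartition K δ mu ∧ ∀ x ∈ mu, IsPrim K x}.Finite :=
    hPfin.subset (fun mu hmu => hmu.1)
  rw [finsum_mem_eq_finite_toFinset_sum _ hSfin,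
    Set.ncard_eq_toFinset_card _ hPfin,
    Finset.card_eq_sum_card_fiberwise (f := phi) (t := hSfin.toFinset) ?_]
  · refine Finset.sum_congr rfl (fun mu hmu => ?_)
    have hmu' := hSfin.mem_toFinset.mp hmu
    rw [← fiber_card hK δ hmu'.1 hmu'.2, ← Set.ncard_coe_finset]
    congr 1
    ext lam
    simp only [Finset.coe_filter, Set.Finite.mem_toFinset, Set.mem_setOf_eq,
      Set.mem_sep_iff]
  · intro lam hlam
    rw [Finset.mem_coe, Set.Finite.mem_toFinset] at hlam ⊢
    exact ⟨(phi_partition hK hlam).1, (phi_partition hK hlam).2⟩
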